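/- Let Γ be a tetravalent G-half-arc-transitive graph for some G ≤ Aut(Γ), let a = att_G(Γ) and let Q_G(Γ) = {q_t, q_h}. Then gcd(a, q_t) = gcd(a, q_h) = 1 and q_t q_h ≡ ±1 (mod a). -/

import Mathlib

/-! Common definitions for tetravalent half-arc-transitive graph theory. -/

open SimpleGraph Set

namespace HalfArc

variable {V W : Type*}

/-- A subgroup of automorphisms acts transitively on the vertices. -/
def IsVertexTrans (Γ : SimpleGraph V) (G : Subgroup (Γ ≃g Γ)) : Prop :=
  ∀ u v : V, ∃ g ∈ G, g u = v

/-- A subgroup of automorphisms acts transitively on the edges. -/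
def IsEdgeTrans (Γ : SimpleGraph V) (G : Subgroup (Γ ≃g Γ)) : Prop :=
  ∀ ⦃u v u' v' : V⦄, Γ.Adj u v → Γ.Adj u' v' →
    ∃ g ∈ G, (g u = u' ∧ g v = v') ∨ (g u = v' ∧ g v = u')

/-- A subgroup of automorphisms acts transitively on the arcs (ordered pairs of
adjacent vertices). -/
def IsArcTrans (Γ : SimpleGraph V) (G : Subgroup (Γ ≃g Γ)) : Prop :=
  ∀ ⦃u v u' v' : V⦄, Γ.Adj u v → Γ.Adj u' v' → ∃ g ∈ G, g u = u' ∧ g v = v'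

/-- Half-arc-transitive: vertex- and edge- but not arc-transitive. -/
def IsHalfArcTrans (Γ : SimpleGraph V) (G : Subgroup (Γ ≃g Γ)) : Prop :=
  IsVertexTrans Γ G ∧ IsEdgeTrans Γ G ∧ ¬ IsArcTrans Γ G

/-- An alternating cycle of length `n` in a graph `Γ` whose edges carry an
orientation `O`: a cyclic sequence of pairwise distinct vertices in which
consecutive vertices are adjacent and any two consecutive edges have opposite
orientations. -/
structure AltCycle (Γ : SimpleGraph V) (O : V → V → Prop) (n : ℕ) where
  f : ZMod n → V
  inj : Function.Injective f
  adj : ∀ i, Γ.Adj (f i) (f (i + 1))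
  alt : ∀ i, O (f i) (f (i + 1)) ↔ O (f (i + 2)) (f (i + 1))

/-- The vertex set of an alternating cycle. -/
def cycVerts {Γ : SimpleGraph V} {O : V → V → Prop} {n : ℕ} (c : AltCycle Γ O n) : Set V :=
  Set.range c.f

/-- The edge set of an alternating cycle. -/
def cycEdges {Γ : SimpleGraph V} {O : V → V → Prop} {n : ℕ} (c : AltCycle Γ O n) :
    Set (Sym2 V) :=
  Set.range fun i => s(c.f i, c.f (i + 1))

/-- The sets of edges of alternating cycles (an alternating cycle, as a subgraph,
is determined by its edge set). -/
def IsAltEdgeSet (Γ : SimpleGraph V) (O : V → V → Prop) (n : ℕ) (E : Set (Sym2 V)) : Prop :=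
  ∃ c : AltCycle Γ O n, cycEdges c = E

/-- The vertex sets of alternating cycles. -/
def IsAltVertSet (Γ : SimpleGraph V) (O : V → V → Prop) (n : ℕ) (A : Set V) : Prop :=
  ∃ c : AltCycle Γ O n, cycVerts c = A

/-- The set of vertices covered by a set of edges. -/
def suppOf (E : Set (Sym2 V)) : Set V := {v | ∃ e ∈ E, v ∈ e}

/-- The graph of alternating cycles: its vertices are the alternating cycles
(represented by their edge sets), two of them adjacent whenever they share a vertex. -/
def altGraph (Γ : SimpleGraph V) (O : V → V → Prop) (n : ℕ) :
    SimpleGraph {E : Set (Sym2 V) // IsAltEdgeSet Γ O n E} where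
  Adj X Y := X ≠ Y ∧ (suppOf X.1 ∩ suppOf Y.1).Nonempty
  symm := by
    constructor
    rintro X Y ⟨hne, x, hx1, hx2⟩
    exact ⟨hne.symm, x, hx2, hx1⟩
  loopless := by constructor; rintro X ⟨hne, -⟩; exact hne rfl

/-- The attachment sets: nonempty intersections of (the vertex sets of) two distinct
alternating cycles. -/
def IsAttSet (Γ : SimpleGraph V) (O : V → V → Prop) (n : ℕ) (A : Set V) : Prop :=
  ∃ c c' : AltCycle Γ O n, cycEdges c ≠ cycEdges c' ∧ (cycVerts c ∩ cycVerts c').Nonempty ∧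
    A = cycVerts c ∩ cycVerts c'

/-- `attachmentIs Γ O n a` : any two distinct alternating cycles with nonempty
intersection meet in exactly `a` vertices. -/
def attachmentIs (Γ : SimpleGraph V) (O : V → V → Prop) (n a : ℕ) : Prop :=
  ∀ A : Set V, IsAttSet Γ O n A → A.ncard = a

/-- A `k`-step rotation of an alternating cycle (in one of the two directions). -/
def IsRot {Γ : SimpleGraph V} {O : V → V → Prop} {n : ℕ} (c : AltCycle Γ O n)
    (g : V → V) (k : ℕ) : Prop :=
  (∀ i, g (c.f i) = c.f (i + k)) ∨ (∀ i, g (c.f i) = c.f (i - k))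

/-- The setup of the paper: a finite connected tetravalent graph `Γ`, a subgroup `G`
of its automorphism group acting half-arc-transitively, one of the two `G`-induced
orientations `O` of the edges of `Γ` (an orbit of `G` on arcs), the `G`-radius `r`
(half the common length of all `G`-alternating cycles) and the `G`-attachment
number `att`, together with the basic structural facts relating them. -/
structure Setup (V : Type*) where
  Γ : SimpleGraph V
  finite : Finite V
  conn : Γ.Connected
  tetra : ∀ v : V, (Γ.neighborSet v).ncard = 4
  G : Subgroup (Γ ≃g Γ)
  hat : IsHalfArcTrans Γ G
  O : V → V → Prop
  O_adj : ∀ ⦃u v⦄, O u v → Γ.Adj u v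
  O_choice : ∀ ⦃u v⦄, Γ.Adj u v → (O u v ↔ ¬ O v u)
  O_inv : ∀ g ∈ G, ∀ ⦃u v⦄, O u v → O (g u) (g v)
  O_orbit : ∀ ⦃u v u' v'⦄, O u v → O u' v' → ∃ g ∈ G, g u = u' ∧ g v = v'
  r : ℕ
  r_pos : 0 < r
  /-- every vertex lies on exactly two `G`-alternating cycles, each of length `2 * r` -/
  alt_cover : ∀ v : V, {E : Set (Sym2 V) | IsAltEdgeSet Γ O (2 * r) E ∧ v ∈ suppOf E}.ncard = 2
  att : ℕ
  att_pos : 0 < att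
  /-- any two non-disjoint `G`-alternating cycles meet in exactly `att` vertices -/
  att_eq : attachmentIs Γ O (2 * r) att
  att_dvd : att ∣ 2 * r

namespace Setup

variable {V : Type*} (S : Setup V)

/-- The kernel of the action of `G` on the set of `G`-alternating cycles:
the elements of `G` fixing every `G`-alternating cycle setwise. -/
def altKernel : Subgroup (S.Γ ≃g S.Γ) where
  carrier := {g | g ∈ S.G ∧ ∀ E : Set (Sym2 V),
    IsAltEdgeSet S.Γ S.O (2 * S.r) E → Sym2.map (g : V → V) '' E = E}
  one_mem' := by
    refine ⟨S.G.one_mem, fun E _ => ?_⟩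
    have : Sym2.map ((1 : S.Γ ≃g S.Γ) : V → V) = id := by
      funext e
      have : ((1 : S.Γ ≃g S.Γ) : V → V) = id := rfl
      rw [this, Sym2.map_id, id]
    rw [this, Set.image_id]
  mul_mem' := by
    rintro g h ⟨hg, hg'⟩ ⟨hh, hh'⟩
    refine ⟨S.G.mul_mem hg hh, fun E hE => ?_⟩
    have hcomp : Sym2.map ((g * h : S.Γ ≃g S.Γ) : V → V)
        = Sym2.map (g : V → V) ∘ Sym2.map (h : V → V) := by
      funext e
      have : ((g * h : S.Γ ≃g S.Γ) : V → V) = (g : V → V) ∘ (h : V → V) := rfl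
      rw [this, Function.comp_apply, ← Sym2.map_map]
    rw [hcomp, Set.image_comp, hh' E hE, hg' E hE]
  inv_mem' := by
    rintro g ⟨hg, hg'⟩
    refine ⟨S.G.inv_mem hg, fun E hE => ?_⟩
    conv_lhs => rw [← hg' E hE]
    rw [← Set.image_comp]
    have : Sym2.map ((g⁻¹ : S.Γ ≃g S.Γ) : V → V) ∘ Sym2.map (g : V → V) = id := by
      funext e
      rw [Function.comp_apply, Sym2.map_map]
      have h1 : ((g⁻¹ : S.Γ ≃g S.Γ) : V → V) ∘ (g : V → V) = id := by
        funext v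
        exact g.toEquiv.symm_apply_apply v
      rw [h1, Sym2.map_id]
    rw [this, Set.image_id]

/-- The kernel of the action of `G` on a collection of sets of vertices. -/
def kernelOn (P : Set V → Prop) : Subgroup (S.Γ ≃g S.Γ) where
  carrier := {g | g ∈ S.G ∧ ∀ A : Set V, P A → (g : V → V) '' A = A}
  one_mem' := ⟨S.G.one_mem, fun A _ => by
    have : ((1 : S.Γ ≃g S.Γ) : V → V) = id := rfl
    rw [this, Set.image_id]⟩
  mul_mem' := by
    rintro g h ⟨hg, hg'⟩ ⟨hh, hh'⟩
    refine ⟨S.G.mul_mem hg hh, fun A hA => ?_⟩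
    have : ((g * h : S.Γ ≃g S.Γ) : V → V) = (g : V → V) ∘ (h : V → V) := rfl
    rw [this, Set.image_comp, hh' A hA, hg' A hA]
  inv_mem' := by
    rintro g ⟨hg, hg'⟩
    refine ⟨S.G.inv_mem hg, fun A hA => ?_⟩
    conv_lhs => rw [← hg' A hA]
    rw [← Set.image_comp]
    have : ((g⁻¹ : S.Γ ≃g S.Γ) : V → V) ∘ (g : V → V) = id := by
      funext v; exact g.toEquiv.symm_apply_apply v
    rw [this, Set.image_id]

/-- The kernel of the action of `G` on the set of all `G`-attachment sets. -/
def attKernel : Subgroup (S.Γ ≃g S.Γ) :=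
  S.kernelOn (IsAttSet S.Γ S.O (2 * S.r))

/-- The block `B_s(C; u_i) = {u_{i+2sj} : 0 ≤ j < att}` of Construction 5.3. -/
def blockSet (s : ℕ) (c : AltCycle S.Γ S.O (2 * S.r)) (i : ZMod (2 * S.r)) : Set V :=
  {v | ∃ j : ℕ, j < S.att ∧ v = c.f (i + (2 * s * j : ℕ))}

/-- The imprimitivity block system `B` of Construction 5.3. -/
def Blocks (s : ℕ) : Set (Set V) :=
  {A | ∃ (c : AltCycle S.Γ S.O (2 * S.r)) (i : ZMod (2 * S.r)), A = S.blockSet s c i}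

/-- The quotient graph `Γ_B` of `Γ` with respect to the block system `B`. -/
def quotGraph (s : ℕ) : SimpleGraph {A : Set V // A ∈ S.Blocks s} where
  Adj X Y := X ≠ Y ∧ ∃ u ∈ X.1, ∃ v ∈ Y.1, S.Γ.Adj u v
  symm := by
    constructor
    rintro X Y ⟨hne, u, hu, v, hv, ha⟩
    exact ⟨hne.symm, v, hv, u, hu, ha.symm⟩
  loopless := by constructor; rintro X ⟨hne, -⟩; exact hne rfl

/-- The kernel of the action of `G` on the quotient graph `Γ_B`. -/
def quotKernel (s : ℕ) : Subgroup (S.Γ ≃g S.Γ) :=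
  S.kernelOn (· ∈ S.Blocks s)

/-- The orientation of the edges of the quotient graph `Γ_B` induced by `O`. -/
def quotO (s : ℕ) (X Y : {A : Set V // A ∈ S.Blocks s}) : Prop :=
  ∃ u ∈ X.1, ∃ v ∈ Y.1, S.O u v

end Setup

/-- The data defining the parameters `q_t` and `q_h` of Section 3: a vertex `v`,
the two `G`-alternating cycles `c` and `c'` through `v` (with `v = u_0 = v_0` and
`v` the tail of the two arcs of `c` incident to it), and the minimality properties
defining `q_t` and `q_h`.  Here `ell = 2r/att`. -/
structure JumpData {V : Type*} (S : Setup V) where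
  v : V
  c : AltCycle S.Γ S.O (2 * S.r)
  c' : AltCycle S.Γ S.O (2 * S.r)
  ell : ℕ
  hell : S.att * ell = 2 * S.r
  hc : c.f 0 = v
  hc' : c'.f 0 = v
  hne : cycEdges c ≠ cycEdges c'
  htail₁ : S.O v (c.f 1)
  htail₂ : S.O v (c.f (-1))
  qt : ℕ
  qh : ℕ
  hqt : c'.f ((qt * ell : ℕ)) = c.f ((ell : ℕ)) ∨
    c'.f ((qt * ell : ℕ)) = c.f (-(ell : ZMod (2 * S.r)))
  hqt_min : ∀ m : ℕ, m < qt → ¬(c'.f ((m * ell : ℕ)) = c.f ((ell : ℕ)) ∨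
    c'.f ((m * ell : ℕ)) = c.f (-(ell : ZMod (2 * S.r))))
  hqh : c.f ((qh * ell : ℕ)) = c'.f ((ell : ℕ)) ∨
    c.f ((qh * ell : ℕ)) = c'.f (-(ell : ZMod (2 * S.r)))
  hqh_min : ∀ m : ℕ, m < qh → ¬(c.f ((m * ell : ℕ)) = c'.f ((ell : ℕ)) ∨
    c.f ((m * ell : ℕ)) = c'.f (-(ell : ZMod (2 * S.r))))

/-- The `G`-alternating jump `jum_G(Γ) = min {q_t, q_h}`. -/
def JumpData.jump {V : Type*} {S : Setup V} (J : JumpData S) : ℕ := min J.qt J.qh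

end HalfArc


open HalfArc

/-!
Write `ℓ = 2r / a` and `v = c.f 0 = c'.f 0`. Since `G` is transitive on the arcs of `O` and every
vertex has in- and out-degree two, an alternating cycle is determined by one of its arcs, so an
element of `G` is determined on a cycle by the image of one arc; and since every vertex lies on
exactly two alternating cycles, an element of `G` carrying `c` onto `c` carries `c'` onto `c'`,
by a rotation or a reflection. The reflection of `c` at `v` reflects `c'` as well, so
`c.f ℓ = c'.f (Q ℓ)` with `Q = ± q_t`. The rotation of `c` by `2ℓ` rotates `c'` by `2 Q ℓ`, hence
`c.f (k ℓ) = c'.f (k Q ℓ)` for all `k`; for `k = q_h` this reads `q_h Q ℓ ≡ ± ℓ (mod a ℓ)`,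
that is `q_t q_h ≡ ± 1 (mod a)`, and the coprimality follows. When `a = 2` it suffices that
`a` divides neither `q_t` nor `q_h`.
-/

namespace HalfArc

variable {V : Type*}

theorem eq_of_mem_of_ncard_eq_two {α : Type*} {s : Set α} (hs : s.ncard = 2) {x y z : α}
    (hx : x ∈ s) (hy : y ∈ s) (hxy : x ≠ y) (hz : z ∈ s) (hzx : z ≠ x) : z = y := by
  obtain ⟨a, b, -, rfl⟩ := Set.ncard_eq_two.mp hs
  simp only [Set.mem_insert_iff, Set.mem_singleton_iff] at hx hy hz
  rcases hx with rfl | rfl <;> rcases hy with rfl | rfl <;> rcases hz with rfl | rfl <;> tauto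

namespace AltCycle

variable {Γ : SimpleGraph V} {O : V → V → Prop} {n : ℕ}

def reverse (c : AltCycle Γ O n) : AltCycle Γ O n where
  f i := c.f (-i)
  inj := c.inj.comp neg_injective
  adj i := by simpa [neg_add_eq_sub] using (c.adj (-i - 1)).symm
  alt i := by
    have h := (c.alt (-i - 2)).symm
    rwa [sub_add_cancel, show -i - 2 + 1 = -(i + 1) by ring, show -i - 2 = -(i + 2) by ring] at h

@[simp]
theorem reverse_f (c : AltCycle Γ O n) (i : ZMod n) : c.reverse.f i = c.f (-i) := rfl

theorem cycEdges_eq_of_apply_eq_add {c d : AltCycle Γ O n} {t : ZMod n}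
    (h : ∀ j, c.f j = d.f (t + j)) : cycEdges c = cycEdges d := by
  ext e
  constructor
  · rintro ⟨i, rfl⟩
    exact ⟨t + i, by simp only [h, add_assoc]⟩
  · rintro ⟨i, rfl⟩
    refine ⟨i - t, ?_⟩
    simp only [h, add_sub_cancel, sub_add_eq_add_sub]

theorem cycEdges_reverse (c : AltCycle Γ O n) : cycEdges c.reverse = cycEdges c := by
  ext e
  constructor
  · rintro ⟨i, rfl⟩
    exact ⟨-i - 1, by simp [Sym2.eq_swap, neg_add_eq_sub, sub_add_cancel]⟩
  · rintro ⟨i, rfl⟩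
    exact ⟨-i - 1, by simp [Sym2.eq_swap, add_comm]⟩

theorem mem_suppOf_cycEdges {c : AltCycle Γ O n} {w : V} (hw : w ∈ cycVerts c) :
    w ∈ suppOf (cycEdges c) := by
  obtain ⟨i, rfl⟩ := hw
  exact ⟨_, ⟨i, rfl⟩, Sym2.mem_mk_left _ _⟩

end AltCycle

namespace Setup

variable (S : Setup V)

instance neZero_two_mul_r : NeZero (2 * S.r) := ⟨by have := S.r_pos; omega⟩

variable {S}

theorem two_ne_zero (ha : 2 < S.att) : (2 : ZMod (2 * S.r)) ≠ 0 := by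
  intro h
  have h' : ((2 : ℕ) : ZMod (2 * S.r)) = 0 := by exact_mod_cast h
  rw [ZMod.natCast_eq_zero_iff] at h'
  have := Nat.le_of_dvd two_pos h'
  have := Nat.le_of_dvd (by have := S.r_pos; omega) S.att_dvd
  omega

theorem O_apply_iff {g : S.Γ ≃g S.Γ} (hg : g ∈ S.G) {u w : V} : S.O (g u) (g w) ↔ S.O u w := by
  refine ⟨fun h => ?_, fun h => S.O_inv g hg h⟩
  simpa only [RelIso.inv_apply_self] using S.O_inv g⁻¹ (S.G.inv_mem hg) h

theorem image_setOf_O_left {g : S.Γ ≃g S.Γ} (hg : g ∈ S.G) (w : V) :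
    (g : V → V) '' {u | S.O w u} = {u | S.O (g w) u} := by
  ext u
  refine ⟨fun ⟨x, hx, hxu⟩ => hxu ▸ (O_apply_iff hg).mpr hx, fun hu => ⟨g⁻¹ u, ?_, ?_⟩⟩
  · rwa [Set.mem_ofPred_eq, ← O_apply_iff hg, RelIso.apply_inv_self]
  · exact RelIso.apply_inv_self g u

theorem image_setOf_O_right {g : S.Γ ≃g S.Γ} (hg : g ∈ S.G) (w : V) :
    (g : V → V) '' {u | S.O u w} = {u | S.O u (g w)} := by
  ext u
  refine ⟨fun ⟨x, hx, hxu⟩ => hxu ▸ (O_apply_iff hg).mpr hx, fun hu => ⟨g⁻¹ u, ?_, ?_⟩⟩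
  · rwa [Set.mem_ofPred_eq, ← O_apply_iff hg, RelIso.apply_inv_self]
  · exact RelIso.apply_inv_self g u

theorem ncard_out_add_ncard_in (w : V) : {u | S.O w u}.ncard + {u | S.O u w}.ncard = 4 := by
  have hnbr : {u | S.O w u} ∪ {u | S.O u w} = S.Γ.neighborSet w := by
    ext u
    refine ⟨fun h => h.elim (fun h => S.O_adj h) (fun h => (S.O_adj h).symm), fun h => ?_⟩
    by_contra hu
    simp only [Set.mem_union, Set.mem_ofPred_eq, not_or] at hu
    exact hu.1 ((S.O_choice h).mpr hu.2)
  have hdisj : Disjoint {u | S.O w u} {u | S.O u w} :=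
    Set.disjoint_left.mpr fun u h h' => (S.O_choice (S.O_adj h)).mp h h'
  have := S.finite
  rw [← S.tetra w, ← hnbr, Set.ncard_union_eq hdisj]

/-- Both degrees are constant by vertex-transitivity, they add up to four, and their sums over
all vertices both count the arcs. -/
theorem ncard_out_eq_two_and_ncard_in_eq_two (w : V) :
    {u | S.O w u}.ncard = 2 ∧ {u | S.O u w}.ncard = 2 := by
  classical
  have := S.finite
  have := S.conn.nonempty
  have := Fintype.ofFinite V
  have hout : ∀ x, {u | S.O x u}.ncard = {u | S.O w u}.ncard := fun x => by
    obtain ⟨g, hg, rfl⟩ := S.hat.1 w x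
    rw [← image_setOf_O_left hg, Set.ncard_image_of_injective _ g.injective]
  have hin : ∀ x, {u | S.O u x}.ncard = {u | S.O u w}.ncard := fun x => by
    obtain ⟨g, hg, rfl⟩ := S.hat.1 w x
    rw [← image_setOf_O_right hg, Set.ncard_image_of_injective _ g.injective]
  have hsum : ∑ x : V, {u | S.O x u}.ncard = ∑ x : V, {u | S.O u x}.ncard := by
    simp only [Set.ncard_eq_toFinset_card', Set.toFinset_ofPred]
    exact Finset.sum_card_bipartiteAbove_eq_sum_card_bipartiteBelow S.O
  simp only [hout, hin, Finset.sum_const, smul_eq_mul] at hsum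
  have := Nat.eq_of_mul_eq_mul_left (Finset.card_pos.mpr Finset.univ_nonempty) hsum
  have := S.ncard_out_add_ncard_in w
  omega

end Setup

namespace AltCycle

variable {S : Setup V} {n : ℕ}

def map (c : AltCycle S.Γ S.O n) {g : S.Γ ≃g S.Γ} (hg : g ∈ S.G) : AltCycle S.Γ S.O n where
  f := g ∘ c.f
  inj := g.injective.comp c.inj
  adj i := g.map_adj_iff.mpr (c.adj i)
  alt i := by simpa only [Function.comp_apply, Setup.O_apply_iff hg] using c.alt i

@[simp]
theorem map_f (c : AltCycle S.Γ S.O n) {g : S.Γ ≃g S.Γ} (hg : g ∈ S.G) (i : ZMod n) :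
    (c.map hg).f i = g (c.f i) := rfl

theorem cycEdges_map (c : AltCycle S.Γ S.O n) {g : S.Γ ≃g S.Γ} (hg : g ∈ S.G) :
    cycEdges (c.map hg) = Sym2.map g '' cycEdges c := by
  ext e
  constructor
  · rintro ⟨i, rfl⟩
    exact ⟨_, ⟨i, rfl⟩, Sym2.map_mk _ _ _⟩
  · rintro ⟨_, ⟨i, rfl⟩, rfl⟩
    exact ⟨i, (Sym2.map_mk _ _ _).symm⟩

theorem O_add_one_iff (c : AltCycle S.Γ S.O n) (i : ZMod n) :
    S.O (c.f (i + 1)) (c.f (i + 1 + 1)) ↔ ¬ S.O (c.f i) (c.f (i + 1)) := by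
  rw [S.O_choice (c.adj (i + 1)), add_assoc, one_add_one_eq_two, c.alt i]

theorem O_intCast_iff (c : AltCycle S.Γ S.O n) (z : ℤ) :
    S.O (c.f z) (c.f (z + 1)) ↔ (Even z ↔ S.O (c.f 0) (c.f 1)) := by
  induction z using Int.induction_on with
  | zero => simp
  | succ i ih =>
    push_cast at ih ⊢
    rw [c.O_add_one_iff, ih, Int.even_add_one]
    tauto
  | pred i ih =>
    have h := c.O_add_one_iff ((-i - 1 : ℤ) : ZMod n)
    push_cast at ih h ⊢
    rw [sub_add_cancel, ih] at h
    rw [sub_add_cancel, Int.even_sub_one]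
    tauto

/-- `c.f (i + 2)` is the neighbour of `c.f (i + 1)` other than `c.f i` on the same side (in or
out) as `c.f i`, and each side has exactly two vertices. -/
theorem apply_add_two_eq (h2 : (2 : ZMod n) ≠ 0) {c d : AltCycle S.Γ S.O n} {i p : ZMod n}
    (h0 : c.f i = d.f p) (h1 : c.f (i + 1) = d.f (p + 1)) : c.f (i + 2) = d.f (p + 2) := by
  have hc : c.f i ≠ c.f (i + 2) := fun h => h2 (by simpa using c.inj h)
  have hd : d.f (p + 2) ≠ c.f i := h0 ▸ fun h => h2 (by simpa using d.inj h)
  have hdeg := S.ncard_out_eq_two_and_ncard_in_eq_two (c.f (i + 1))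
  by_cases hO : S.O (c.f i) (c.f (i + 1))
  · have hOd : S.O (d.f p) (d.f (p + 1)) := h0 ▸ h1 ▸ hO
    refine (eq_of_mem_of_ncard_eq_two hdeg.2 hO ((c.alt i).mp hO) hc ?_ hd).symm
    exact h1 ▸ (d.alt p).mp hOd
  · have hO' : S.O (c.f (i + 1)) (c.f i) := (S.O_choice (c.adj i).symm).mpr hO
    have hOd : ¬ S.O (d.f p) (d.f (p + 1)) := h0 ▸ h1 ▸ hO
    have hnext : ∀ {e : AltCycle S.Γ S.O n} {j : ZMod n}, ¬ S.O (e.f j) (e.f (j + 1)) →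
        S.O (e.f (j + 1)) (e.f (j + 2)) := fun {e j} h => by
      simpa only [add_assoc, one_add_one_eq_two] using (e.O_add_one_iff j).mpr h
    refine (eq_of_mem_of_ncard_eq_two hdeg.1 hO' (hnext hO) hc ?_ hd).symm
    exact h1 ▸ hnext hOd

variable [NeZero n]

theorem apply_eq_add_of_apply_eq (h2 : (2 : ZMod n) ≠ 0) {c d : AltCycle S.Γ S.O n} {p : ZMod n}
    (h0 : c.f 0 = d.f p) (h1 : c.f 1 = d.f (p + 1)) : ∀ j, c.f j = d.f (p + j) := by
  have key : ∀ k : ℕ, c.f k = d.f (p + k) ∧ c.f (k + 1) = d.f (p + k + 1) := by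
    intro k
    induction k with
    | zero => simpa using ⟨h0, h1⟩
    | succ k ih =>
      push_cast
      refine ⟨by rw [← add_assoc]; exact ih.2, ?_⟩
      convert apply_add_two_eq h2 ih.1 ih.2 using 2 <;> ring
  intro j
  simpa using (key j.val).1

theorem apply_eq_add_or_eq_sub_of_cycEdges_eq (h2 : (2 : ZMod n) ≠ 0)
    {c d : AltCycle S.Γ S.O n} (hE : cycEdges c = cycEdges d) {p : ZMod n} (h0 : c.f 0 = d.f p) :
    (∀ j, c.f j = d.f (p + j)) ∨ ∀ j, c.f j = d.f (p - j) := by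
  obtain ⟨m, hm⟩ : s(c.f 0, c.f (0 + 1)) ∈ cycEdges d := hE ▸ ⟨0, rfl⟩
  rcases Sym2.eq_iff.mp hm with ⟨hm0, hm1⟩ | ⟨hm0, hm1⟩
  · obtain rfl : m = p := d.inj (hm0.trans h0)
    exact Or.inl (apply_eq_add_of_apply_eq h2 h0 (by simpa using hm1.symm))
  · obtain rfl : m = p - 1 := eq_sub_of_add_eq (d.inj (hm1.trans h0))
    have h := apply_eq_add_of_apply_eq (d := d.reverse) (p := -(p - 1 + 1)) h2
      (by simpa using h0) (by simpa [neg_add_eq_sub] using hm0.symm)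
    exact Or.inr fun j => by simpa [neg_add_eq_sub] using h j

theorem exists_apply_eq_add (h2 : (2 : ZMod n) ≠ 0) {c d : AltCycle S.Γ S.O n}
    (hc : S.O (c.f 0) (c.f 1)) {t : ZMod n} (hd : S.O (d.f t) (d.f (t + 1))) :
    ∃ g ∈ S.G, ∀ j, g (c.f j) = d.f (t + j) := by
  obtain ⟨g, hg, h0, h1⟩ := S.O_orbit hc hd
  exact ⟨g, hg, apply_eq_add_of_apply_eq (c := c.map hg) h2 h0 h1⟩

theorem cycEdges_eq_of_ne {c₁ c₂ d : AltCycle S.Γ S.O (2 * S.r)}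
    (h : cycEdges c₁ ≠ cycEdges c₂) {w : V} (h₁ : w ∈ cycVerts c₁) (h₂ : w ∈ cycVerts c₂)
    (hd : w ∈ cycVerts d) (hd₁ : cycEdges d ≠ cycEdges c₁) : cycEdges d = cycEdges c₂ :=
  eq_of_mem_of_ncard_eq_two (S.alt_cover w) ⟨⟨c₁, rfl⟩, mem_suppOf_cycEdges h₁⟩
    ⟨⟨c₂, rfl⟩, mem_suppOf_cycEdges h₂⟩ h ⟨⟨d, rfl⟩, mem_suppOf_cycEdges hd⟩ hd₁

/-- As every vertex lies on exactly two alternating cycles, `g` carries the second cycle `c'`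
through `c.f 0` onto the second cycle `d'` through its image. -/
theorem apply_partner_eq_add_or_eq_sub (h2 : (2 : ZMod (2 * S.r)) ≠ 0)
    {c c' d d' : AltCycle S.Γ S.O (2 * S.r)} (hc : cycEdges c ≠ cycEdges c')
    (hd : cycEdges d ≠ cycEdges d') (hcc' : c.f 0 = c'.f 0) {t m : ZMod (2 * S.r)}
    (hdd' : d.f t = d'.f m) {g : S.Γ ≃g S.Γ} (hg : g ∈ S.G) (hgc : ∀ j, g (c.f j) = d.f (t + j)) :
    (∀ j, g (c'.f j) = d'.f (m + j)) ∨ ∀ j, g (c'.f j) = d'.f (m - j) := by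
  have hw : (c'.map hg).f 0 = d'.f m := by rw [map_f, ← hcc', hgc, add_zero, hdd']
  have hcd : cycEdges (c.map hg) = cycEdges d := cycEdges_eq_of_apply_eq_add hgc
  have hne : cycEdges (c'.map hg) ≠ cycEdges d := fun h => hc <| by
    rw [← hcd, cycEdges_map, cycEdges_map] at h
    exact (Set.image_injective.mpr (Sym2.map.injective g.injective) h).symm
  have hE := cycEdges_eq_of_ne hd ⟨t, rfl⟩ ⟨m, hdd'.symm⟩ ⟨0, hw.trans hdd'.symm⟩ hne
  exact apply_eq_add_or_eq_sub_of_cycEdges_eq h2 hE hw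

end AltCycle

namespace JumpData

open AltCycle

variable {S : Setup V} (J : JumpData S)

theorem c_zero_eq : J.c.f 0 = J.c'.f 0 := J.hc.trans J.hc'.symm

theorem O_c_zero_one : S.O (J.c.f 0) (J.c.f 1) := J.hc ▸ J.htail₁

theorem intCast_mul_ell_eq_zero_iff (z : ℤ) :
    (z : ZMod (2 * S.r)) * J.ell = 0 ↔ (z : ZMod S.att) = 0 := by
  have hell : (J.ell : ℤ) ≠ 0 := Nat.cast_ne_zero.mpr fun h => by
    have := J.hell
    have := S.r_pos
    simp_all
  rw [show (z : ZMod (2 * S.r)) * J.ell = ((z * J.ell : ℤ) : ZMod (2 * S.r)) by push_cast; rfl,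
    ZMod.intCast_zmod_eq_zero_iff_dvd, ZMod.intCast_zmod_eq_zero_iff_dvd, ← J.hell]
  push_cast
  exact mul_dvd_mul_iff_right hell

theorem natCast_eq_one_or_neg_one_of_mul_ell {x : ℕ}
    (h : (x : ZMod (2 * S.r)) * J.ell = J.ell ∨ (x : ZMod (2 * S.r)) * J.ell = -J.ell) :
    (x : ZMod S.att) = 1 ∨ (x : ZMod S.att) = -1 := by
  rcases h with h | h
  · have := (J.intCast_mul_ell_eq_zero_iff (x - 1)).mp (by push_cast; linear_combination h)
    exact Or.inl (by push_cast at this; linear_combination this)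
  · have := (J.intCast_mul_ell_eq_zero_iff (x + 1)).mp (by push_cast; linear_combination h)
    exact Or.inr (by push_cast at this; linear_combination this)

theorem not_att_dvd_of_apply_mul_ell_eq {f g : ZMod (2 * S.r) → V} (hg : g.Injective)
    (h0 : f 0 = g 0) {q : ℕ}
    (hq : f ((q * J.ell : ℕ)) = g J.ell ∨ f ((q * J.ell : ℕ)) = g (-(J.ell : ZMod (2 * S.r))))
    (ha : S.att ≠ 1) : ¬ S.att ∣ q := by
  rintro ⟨k, rfl⟩
  have hzero : (((S.att * k * J.ell : ℕ)) : ZMod (2 * S.r)) = 0 := by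
    rw [mul_right_comm, J.hell, Nat.cast_mul, ZMod.natCast_self, zero_mul]
  rw [hzero, h0] at hq
  have hell : ((1 : ℤ) : ZMod (2 * S.r)) * J.ell = 0 := by
    rcases hq with h | h <;> simpa [eq_comm] using hg h
  have := (J.intCast_mul_ell_eq_zero_iff 1).mp hell
  rw [Int.cast_one, ← Nat.cast_one, ZMod.natCast_eq_zero_iff, Nat.dvd_one] at this
  exact ha this

theorem two_mul_ell_ne_zero (ha : 2 < S.att) : 2 * (J.ell : ZMod (2 * S.r)) ≠ 0 := by
  intro h
  have := (J.intCast_mul_ell_eq_zero_iff 2).mp (by exact_mod_cast h)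
  rw [Int.cast_ofNat, ← Nat.cast_ofNat, ZMod.natCast_eq_zero_iff] at this
  exact absurd (Nat.le_of_dvd two_pos this) (by omega)

/-- The two out-neighbours of `v` lie on `c`, and alternating cycles sharing an edge coincide. -/
theorem not_O_c'_zero_one (ha : 2 < S.att) : ¬ S.O (J.c'.f 0) (J.c'.f 1) := by
  intro h
  have h2 := S.two_ne_zero ha
  rw [← c_zero_eq] at h
  by_cases h1 : J.c'.f 1 = J.c.f 1
  · refine J.hne (cycEdges_eq_of_apply_eq_add (t := 0) ?_)
    exact apply_eq_add_of_apply_eq h2 (by simpa using J.c_zero_eq) (by simpa using h1.symm)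
  · have hO : S.O (J.c.f 0) (J.c.f (-1)) := J.hc ▸ J.htail₂
    have hne : J.c.f 1 ≠ J.c.f (-1) := fun h => h2 (by
      linear_combination J.c.inj h)
    have h1' := eq_of_mem_of_ncard_eq_two (S.ncard_out_eq_two_and_ncard_in_eq_two _).1
      J.O_c_zero_one hO hne h h1
    refine J.hne (cycEdges_reverse J.c ▸ cycEdges_eq_of_apply_eq_add (t := 0) ?_)
    exact apply_eq_add_of_apply_eq h2 (by simpa using J.c_zero_eq) (by simpa using h1'.symm)

/-- The reflection of `c` fixing `v` (an element of `G` by arc-transitivity on `O`) also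
reflects `c'`: it cannot fix `c'` pointwise, as it moves `c'.f (qt * ℓ) = c.f (± ℓ)`. -/
theorem apply_neg_eq_of_apply_eq (ha : 2 < S.att) {x y : ZMod (2 * S.r)}
    (h : J.c.f x = J.c'.f y) : J.c.f (-x) = J.c'.f (-y) := by
  have h2 := S.two_ne_zero ha
  obtain ⟨θ, hθ, hθc⟩ := exists_apply_eq_add h2 (d := J.c.reverse) (t := 0) J.O_c_zero_one
    (by simpa using J.hc ▸ J.htail₂)
  have hd : cycEdges J.c.reverse ≠ cycEdges J.c' := (cycEdges_reverse J.c).symm ▸ J.hne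
  rcases apply_partner_eq_add_or_eq_sub h2 J.hne hd J.c_zero_eq (t := 0) (m := 0)
    (by simpa using J.c_zero_eq) hθ hθc with hθc' | hθc'
  · exfalso
    have hfix := hθc' ((J.qt * J.ell : ℕ))
    rw [zero_add] at hfix
    have hsymm : J.c.f (-(J.ell : ZMod (2 * S.r))) = J.c.f J.ell := by
      rcases J.hqt with hq | hq <;> rw [hq, hθc, reverse_f, zero_add] at hfix
      · exact hfix
      · rw [neg_neg] at hfix
        exact hfix.symm
    exact J.two_mul_ell_ne_zero ha (by linear_combination -J.c.inj hsymm)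
  · have := congrArg θ h
    rwa [hθc, hθc', reverse_f, zero_add, zero_sub] at this

theorem exists_c_ell_eq (ha : 2 < S.att) :
    ∃ Q : ZMod (2 * S.r), (Q = J.qt ∨ Q = -J.qt) ∧ J.c.f J.ell = J.c'.f (Q * J.ell) := by
  rcases J.hqt with h | h
  · exact ⟨J.qt, Or.inl rfl, by rw [← h]; push_cast; rfl⟩
  · refine ⟨-J.qt, Or.inr rfl, ?_⟩
    have := J.apply_neg_eq_of_apply_eq ha h.symm
    rw [neg_neg] at this
    rw [this]
    push_cast
    ring_nf

theorem exists_c_eq_c'_ell (ha : 2 < S.att) : ∃ y, J.c.f y = J.c'.f J.ell := by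
  rcases J.hqh with h | h
  · exact ⟨_, h⟩
  · exact ⟨_, by simpa using J.apply_neg_eq_of_apply_eq ha h⟩

/-- For even `ℓ` the rotation of `c` by `ℓ` preserves `c'`; for odd `ℓ` the vertex `c'.f (-ℓ)` is a
tail on `c'`, and the element of `G` carrying `c` onto `c'` from there carries `c'` onto `c`. -/
theorem exists_c_two_mul_ell_eq (ha : 2 < S.att) {Q : ZMod (2 * S.r)}
    (hQ : J.c.f J.ell = J.c'.f (Q * J.ell)) : ∃ m, J.c.f (2 * J.ell) = J.c'.f m := by
  have h2 := S.two_ne_zero ha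
  rcases Nat.even_or_odd J.ell with hev | hodd
  · have hO : S.O (J.c.f J.ell) (J.c.f (J.ell + 1)) := by
      simpa using (J.c.O_intCast_iff J.ell).mpr
        (iff_of_true (by exact_mod_cast hev) J.O_c_zero_one)
    obtain ⟨ρ, hρ, hρc⟩ := exists_apply_eq_add h2 J.O_c_zero_one hO
    have hρv : ρ (J.c.f J.ell) = J.c.f (2 * J.ell) := by rw [hρc]; ring_nf
    rcases apply_partner_eq_add_or_eq_sub h2 J.hne J.hne J.c_zero_eq hQ hρ hρc with hρc' | hρc'
    · exact ⟨_, by rw [← hρv, hQ, hρc']⟩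
    · exact ⟨_, by rw [← hρv, hQ, hρc']⟩
  · have hO : S.O (J.c'.f (-J.ell)) (J.c'.f (-J.ell + 1)) := by
      simpa using (J.c'.O_intCast_iff (-J.ell)).mpr
        (iff_of_false (by simpa using Nat.not_even_iff_odd.mpr hodd) (J.not_O_c'_zero_one ha))
    obtain ⟨s, hs, hsc⟩ := exists_apply_eq_add h2 J.O_c_zero_one hO
    obtain ⟨y, hy⟩ := J.exists_c_eq_c'_ell ha
    have hs2 : s (J.c.f (2 * J.ell)) = J.c.f y := by rw [hsc, hy]; ring_nf
    rcases apply_partner_eq_add_or_eq_sub h2 J.hne (Ne.symm J.hne) J.c_zero_eq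
      (J.apply_neg_eq_of_apply_eq ha hy).symm hs hsc with hsc' | hsc'
    · exact ⟨2 * y, s.injective (by rw [hs2, hsc']; ring_nf)⟩
    · exact ⟨-(2 * y), s.injective (by rw [hs2, hsc']; ring_nf)⟩

/-- The rotation of `c` by `2ℓ` rotates `c'` by `2Qℓ`: were it a reflection of `c'`, the
symmetric pair `c.f (± ℓ) = c'.f (± Qℓ)` would force `c.f (2ℓ) = v`. -/
theorem exists_rotation_two_mul_ell (ha : 2 < S.att) {Q : ZMod (2 * S.r)}
    (hQ : J.c.f J.ell = J.c'.f (Q * J.ell)) :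
    ∃ ρ ∈ S.G, ∀ j, ρ (J.c.f j) = J.c.f (2 * J.ell + j) ∧
      ρ (J.c'.f j) = J.c'.f (2 * Q * J.ell + j) := by
  have h2 := S.two_ne_zero ha
  obtain ⟨m, hm⟩ := J.exists_c_two_mul_ell_eq ha hQ
  have hO : S.O (J.c.f (2 * J.ell)) (J.c.f (2 * J.ell + 1)) := by
    simpa using (J.c.O_intCast_iff (2 * J.ell)).mpr (iff_of_true (even_two_mul _) J.O_c_zero_one)
  obtain ⟨ρ, hρ, hρc⟩ := exists_apply_eq_add h2 J.O_c_zero_one hO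
  have hρQ : ρ (J.c'.f (-(Q * J.ell))) = J.c'.f (Q * J.ell) := by
    rw [← J.apply_neg_eq_of_apply_eq ha hQ, hρc, ← hQ]
    ring_nf
  refine ⟨ρ, hρ, fun j => ⟨hρc j, ?_⟩⟩
  rcases apply_partner_eq_add_or_eq_sub h2 J.hne J.hne J.c_zero_eq hm hρ hρc with hρc' | hρc'
  · rw [hρc'] at hρQ ⊢
    congr 1
    linear_combination J.c'.inj hρQ
  · rw [hρc'] at hρQ
    have hm0 : m = 0 := by linear_combination J.c'.inj hρQ
    refine absurd (J.c.inj (hm.trans ?_)) (J.two_mul_ell_ne_zero ha)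
    rw [hm0, ← J.c_zero_eq]

theorem c_natCast_mul_ell (ha : 2 < S.att) {Q : ZMod (2 * S.r)}
    (hQ : J.c.f J.ell = J.c'.f (Q * J.ell)) (k : ℕ) :
    J.c.f (k * J.ell) = J.c'.f (k * Q * J.ell) := by
  obtain ⟨ρ, -, hρ⟩ := J.exists_rotation_two_mul_ell ha hQ
  induction k using Nat.twoStepInduction with
  | zero => simpa using J.c_zero_eq
  | one => simpa using hQ
  | more k ih _ =>
    calc J.c.f ((k + 2 : ℕ) * J.ell) = ρ (J.c.f (k * J.ell)) := by
          rw [(hρ _).1]; push_cast; ring_nf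
      _ = J.c'.f ((k + 2 : ℕ) * Q * J.ell) := by
          rw [ih, (hρ _).2]; push_cast; ring_nf

theorem qt_mul_qh_eq_one_or_neg_one_of_two_lt (ha : 2 < S.att) :
    ((J.qt * J.qh : ℕ) : ZMod S.att) = 1 ∨ ((J.qt * J.qh : ℕ) : ZMod S.att) = -1 := by
  obtain ⟨Q, hQqt, hQ⟩ := J.exists_c_ell_eq ha
  apply J.natCast_eq_one_or_neg_one_of_mul_ell
  have h := J.c_natCast_mul_ell ha hQ J.qh
  have hqh : J.c.f (J.qh * J.ell) = J.c'.f J.ell ∨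
      J.c.f (J.qh * J.ell) = J.c'.f (-(J.ell : ZMod (2 * S.r))) := by
    simpa using J.hqh
  rcases hqh with h' | h' <;> have hinj := J.c'.inj (h.symm.trans h') <;>
    rcases hQqt with rfl | rfl
  · exact Or.inl (by push_cast; linear_combination hinj)
  · exact Or.inr (by push_cast; linear_combination -hinj)
  · exact Or.inr (by push_cast; linear_combination hinj)
  · exact Or.inl (by push_cast; linear_combination -hinj)

theorem qt_mul_qh_eq_one_or_neg_one :
    ((J.qt * J.qh : ℕ) : ZMod S.att) = 1 ∨ ((J.qt * J.qh : ℕ) : ZMod S.att) = -1 := by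
  rcases (by have := S.att_pos; omega : S.att = 1 ∨ S.att = 2 ∨ 2 < S.att) with ha | ha | ha
  · rw [ha]
    exact Or.inl (Subsingleton.elim _ _)
  · have hqt := J.not_att_dvd_of_apply_mul_ell_eq J.c.inj J.c_zero_eq.symm J.hqt (by omega)
    have hqh := J.not_att_dvd_of_apply_mul_ell_eq J.c'.inj J.c_zero_eq J.hqh (by omega)
    rw [ha, ← even_iff_two_dvd, Nat.not_even_iff_odd] at hqt hqh
    rw [ha, ZMod.natCast_eq_one_iff_odd]
    exact Or.inl (hqt.mul hqh)
  · exact J.qt_mul_qh_eq_one_or_neg_one_of_two_lt ha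

end JumpData

end HalfArc

/-- Lemma 3.2 of the paper:
`gcd(a, q_t) = gcd(a, q_h) = 1` and `q_t q_h ≡ ±1 (mod a)`. -/
theorem statement_1 {V : Type*} (S : Setup V) (J : JumpData S) :
    Nat.gcd S.att J.qt = 1 ∧ Nat.gcd S.att J.qh = 1 ∧
    (((J.qt * J.qh : ℕ) : ZMod S.att) = 1 ∨ ((J.qt * J.qh : ℕ) : ZMod S.att) = -1) := by
  have h := J.qt_mul_qh_eq_one_or_neg_one
  have hunit : IsUnit ((J.qt : ZMod S.att) * J.qh) := by
    rw [← Nat.cast_mul]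
    rcases h with h | h <;> rw [h]
    exacts [isUnit_one, isUnit_one.neg]
  exact ⟨((ZMod.isUnit_iff_coprime _ _).mp (isUnit_of_mul_isUnit_left hunit)).symm,
    ((ZMod.isUnit_iff_coprime _ _).mp (isUnit_of_mul_isUnit_right hunit)).symm, h⟩
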